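/- arXiv:1310.5539 — 2 statements merged into one kernel-verified Lean document; each statement's English description precedes it below -/
import Mathlib

section
/- Let G be a cubic finite simple graph with n vertices and H its hexagon graph. The white edges of H form a perfect matching W of H, and the number of blue perfect matchings of H (perfect matchings of H using only blue edges) is exactly 2ⁿ. -/
-- ZMod 6 decidable lemmas
lemma zsub : ∀ i : ZMod 6, i - 1 + 1 = i := by decide
lemma zne3 : ∀ a : ZMod 6, a ≠ a + 3 := by decide
lemma ztlt : ∀ i : ZMod 6, (if i.val < 3 then i else i - 3).val < 3 := by decide
lemma zt_or : ∀ i : ZMod 6, i = (if i.val < 3 then i else i - 3) ∨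
    i = (if i.val < 3 then i else i - 3) + 3 := by decide
lemma zt_eq : ∀ i a : ZMod 6, a.val < 3 → (i = a ∨ i = a + 3) →
    a = (if i.val < 3 then i else i - 3) := by decide
lemma zone : (1 : ZMod 6) ≠ 0 := by decide
lemma ztwo : (2 : ZMod 6) ≠ 0 := by decide

def cc (b : Bool) (k : Fin 3) : ZMod 6 := ((2 * (k : ℕ) + (if b then 1 else 0) : ℕ) : ZMod 6)

lemma cc_par : ∀ (b : Bool) (k : Fin 3), ((cc b k).val % 2 = 1) ↔ b = true := by decide
lemma cc_surj : ∀ (b : Bool) (j : ZMod 6), ((j.val % 2 = 1) ↔ b = true) → ∃ k : Fin 3, cc b k = j := by decide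
lemma zj_ex : ∀ (b : Bool) (i : ZMod 6), ∃ j : ZMod 6, ((j.val % 2 = 1) ↔ b = true) ∧ (i = j ∨ i = j + 1) := by decide
lemma zj_uniq : ∀ (b : Bool) (i j j' : ZMod 6), ((j.val % 2 = 1) ↔ b = true) →
    ((j'.val % 2 = 1) ↔ b = true) → (i = j ∨ i = j + 1) → (i = j' ∨ i = j' + 1) → j = j' := by decide

lemma blue_rep {V : Type*} {v w : V} {j k : ZMod 6}
    (h : s((v,j),(v,j+1)) = s((w,k),(w,k+1))) : v = w ∧ j = k := by
  rw [Sym2.eq_iff] at h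
  rcases h with ⟨h1, h2⟩ | ⟨h1, h2⟩
  · exact ⟨congrArg Prod.fst h1, congrArg Prod.snd h1⟩
  · have hv : v = w := congrArg Prod.fst h1
    have hj : j = k + 1 := congrArg Prod.snd h1
    have hk : j + 1 = k := congrArg Prod.snd h2
    subst hv
    exfalso
    have h2' : j = j + 2 := by
      calc j = k + 1 := hj
        _ = (j + 1) + 1 := by rw [hk]
        _ = j + 2 := by ring
    exact ztwo (left_eq_add.mp h2')

lemma chain (P : ZMod 6 → Prop) (h : ∀ i, P i ↔ ¬ P (i - 1)) :
    ∀ j : ZMod 6, P j ↔ ((j.val % 2 = 1) ↔ P 1) := by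
  have h0 := h 0; have h1 := h 1; have h2 := h 2
  have h3 := h 3; have h4 := h 4; have h5 := h 5
  rw [show (0:ZMod 6) - 1 = 5 by decide] at h0
  rw [show (1:ZMod 6) - 1 = 0 by decide] at h1
  rw [show (2:ZMod 6) - 1 = 1 by decide] at h2
  rw [show (3:ZMod 6) - 1 = 2 by decide] at h3
  rw [show (4:ZMod 6) - 1 = 3 by decide] at h4
  rw [show (5:ZMod 6) - 1 = 4 by decide] at h5
  intro j
  have hj : j = 0 ∨ j = 1 ∨ j = 2 ∨ j = 3 ∨ j = 4 ∨ j = 5 := by revert j; decide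
  rcases hj with rfl|rfl|rfl|rfl|rfl|rfl
  · have hp : ¬((0:ZMod 6).val % 2 = 1) := by decide
    tauto
  · have hp : ((1:ZMod 6).val % 2 = 1) := by decide
    tauto
  · have hp : ¬((2:ZMod 6).val % 2 = 1) := by decide
    tauto
  · have hp : ((3:ZMod 6).val % 2 = 1) := by decide
    tauto
  · have hp : ¬((4:ZMod 6).val % 2 = 1) := by decide
    tauto
  · have hp : ((5:ZMod 6).val % 2 = 1) := by decide
    tauto


/-- The two white edges replacing the edge `uv` of `G` in the hexagon graph
(rule 3 of the construction). -/
def whitePair {V : Type*} [DecidableEq V] (ind : V → V → ZMod 6) (u v : V) :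
    Finset (Sym2 (V × ZMod 6)) :=
  if (ind u v).val % 2 = (ind v u).val % 2 then
    {s((u, ind u v), (v, ind v u + 3)), s((u, ind u v + 3), (v, ind v u))}
  else
    {s((u, ind u v), (v, ind v u)), s((u, ind u v + 3), (v, ind v u + 3))}

lemma whitePair_comm {V : Type*} [DecidableEq V] (ind : V → V → ZMod 6) (u v : V) :
    whitePair ind u v = whitePair ind v u := by
  unfold whitePair
  by_cases h : (ind u v).val % 2 = (ind v u).val % 2
  · rw [if_pos h, if_pos h.symm, Finset.pair_comm]
    congr 1
    · exact Sym2.eq_swap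
    · rw [Sym2.eq_swap]
  · rw [if_neg h, if_neg (fun hh => h hh.symm)]
    congr 1
    · exact Sym2.eq_swap
    · rw [Sym2.eq_swap]

lemma nbr_exists {V : Type*} [Fintype V] [DecidableEq V] (G : SimpleGraph V) [DecidableRel G.Adj]
    (hcubic : ∀ v, G.degree v = 3) (ind : V → V → ZMod 6)
    (hind3 : ∀ v u, G.Adj v u → (ind v u).val < 3)
    (hinj : ∀ v u w, G.Adj v u → G.Adj v w → u ≠ w → ind v u ≠ ind v w)
    (v : V) (t : ZMod 6) (ht : t.val < 3) : ∃ u, G.Adj v u ∧ ind v u = t := by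
  classical
  set S := (G.neighborFinset v).image (ind v) with hS
  have hinj' : Set.InjOn (ind v) (G.neighborFinset v) := by
    intro a ha b hb hab
    by_contra hne
    exact hinj v a b (by simpa using ha) (by simpa using hb) hne hab
  have hcard : S.card = 3 := by
    rw [hS, Finset.card_image_of_injOn hinj', SimpleGraph.card_neighborFinset_eq_degree, hcubic]
  have hsub : S ⊆ Finset.univ.filter (fun x : ZMod 6 => x.val < 3) := by
    intro x hx
    simp only [hS, Finset.mem_image] at hx
    obtain ⟨u, hu, rfl⟩ := hx
    simp only [Finset.mem_filter, Finset.mem_univ, true_and]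
    exact hind3 v u (by simpa using hu)
  have hfc : (Finset.univ.filter (fun x : ZMod 6 => x.val < 3)).card = 3 := by decide
  have hSeq := Finset.eq_of_subset_of_card_le hsub (by rw [hfc, hcard])
  have htS : t ∈ S := by rw [hSeq]; simp [ht]
  simp only [hS, Finset.mem_image] at htS
  obtain ⟨u, hu, hut⟩ := htS
  exact ⟨u, by simpa using hu, hut⟩

lemma wp_unique {V : Type*} [DecidableEq V] (ind : V → V → ZMod 6) {v u : V} (hvu : v ≠ u)
    {i : ZMod 6} {e e' : Sym2 (V × ZMod 6)}
    (he : e ∈ whitePair ind v u) (he' : e' ∈ whitePair ind v u)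
    (h1 : (v,i) ∈ e) (h2 : (v,i) ∈ e') : e = e' := by
  unfold whitePair at he he'
  split_ifs at he he' with hc <;>
  · simp only [Finset.mem_insert, Finset.mem_singleton] at he he'
    rcases he with rfl | rfl <;> rcases he' with rfl | rfl <;> try rfl
    all_goals
      exfalso
      simp only [Sym2.mem_iff, Prod.mk.injEq] at h1 h2
      rcases h1 with ⟨hv1, hi1⟩ | ⟨hv1, hi1⟩ <;> rcases h2 with ⟨hv2, hi2⟩ | ⟨hv2, hi2⟩ <;>
        first
          | exact hvu hv1
          | exact hvu hv2
          | exact zne3 _ (hi1.symm.trans hi2)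
          | exact zne3 _ (hi2.symm.trans hi1)


def tf {V : Type*} [Fintype V] [DecidableEq V] (f : V → Bool) : Finset (Sym2 (V × ZMod 6)) :=
  Finset.univ.image (fun p : V × Fin 3 => s((p.1, cc (f p.1) p.2), (p.1, cc (f p.1) p.2 + 1)))

lemma mem_tf {V : Type*} [Fintype V] [DecidableEq V] {f : V → Bool} {e : Sym2 (V × ZMod 6)} :
    e ∈ tf f ↔ ∃ v j, ((j.val % 2 = 1) ↔ f v = true) ∧ e = s((v,j),(v,j+1)) := by
  simp only [tf, Finset.mem_image, Finset.mem_univ, true_and]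
  constructor
  · rintro ⟨⟨v,k⟩, rfl⟩
    exact ⟨v, cc (f v) k, cc_par _ _, rfl⟩
  · rintro ⟨v, j, hp, rfl⟩
    obtain ⟨k, hk⟩ := cc_surj _ _ hp
    exact ⟨⟨v,k⟩, by rw [hk]⟩

lemma tf_sub {V : Type*} [Fintype V] [DecidableEq V] (f : V → Bool) :
    tf f ⊆ Finset.univ.image (fun p : V × ZMod 6 => s((p.1, p.2), (p.1, p.2 + 1))) := by
  intro e he
  obtain ⟨v, j, -, rfl⟩ := mem_tf.mp he
  exact Finset.mem_image.mpr ⟨(v,j), Finset.mem_univ _, rfl⟩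

lemma tf_pm {V : Type*} [Fintype V] [DecidableEq V] (f : V → Bool) (x : V × ZMod 6) :
    ∃! e, e ∈ tf f ∧ x ∈ e := by
  obtain ⟨v, i⟩ := x
  obtain ⟨j, hp, hij⟩ := zj_ex (f v) i
  refine ⟨s((v,j),(v,j+1)), ⟨mem_tf.mpr ⟨v, j, hp, rfl⟩, ?_⟩, ?_⟩
  · rcases hij with h | h <;> simp [Sym2.mem_iff, h]
  · rintro e' ⟨he', hx⟩
    obtain ⟨w, j', hp', rfl⟩ := mem_tf.mp he'
    simp only [Sym2.mem_iff, Prod.mk.injEq] at hx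
    have hw : v = w := by rcases hx with ⟨h,-⟩|⟨h,-⟩ <;> exact h
    subst hw
    have hij' : i = j' ∨ i = j' + 1 := by
      rcases hx with ⟨-,h⟩|⟨-,h⟩
      · exact Or.inl h
      · exact Or.inr h
    obtain rfl := zj_uniq (f v) i j' j hp' hp hij' hij
    rfl

lemma tf_one {V : Type*} [Fintype V] [DecidableEq V] (f : V → Bool) (v : V) :
    (s((v,(1:ZMod 6)),(v,2)) ∈ tf f) ↔ f v = true := by
  constructor
  · intro h
    obtain ⟨w, j, hp, heq⟩ := mem_tf.mp h
    have h2 : s((v,(1:ZMod 6)),(v,1+1)) = s((w,j),(w,j+1)) := by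
      rw [show (1:ZMod 6)+1 = 2 by decide]; exact heq
    obtain ⟨rfl, rfl⟩ := blue_rep h2
    exact hp.mp (by decide)
  · intro h
    refine mem_tf.mpr ⟨v, 1, iff_of_true (by decide) h, ?_⟩
    rw [show (1:ZMod 6)+1 = 2 by decide]

lemma tf_surj {V : Type*} [Fintype V] [DecidableEq V] (M : Finset (Sym2 (V × ZMod 6)))
    (hMb : M ⊆ Finset.univ.image (fun p : V × ZMod 6 => s((p.1, p.2), (p.1, p.2 + 1))))
    (hMpm : ∀ x : V × ZMod 6, ∃! e, e ∈ M ∧ x ∈ e) :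
    ∃ f : V → Bool, tf f = M := by
  have hQ : ∀ (v : V) (i : ZMod 6), (s((v,i),(v,i+1)) ∈ M) ↔ ¬ (s((v,i-1),(v,i)) ∈ M) := by
    intro v i
    obtain ⟨e, ⟨heM, hxe⟩, hu⟩ := hMpm (v,i)
    obtain ⟨⟨w,j⟩, -, rfl⟩ := Finset.mem_image.mp (hMb heM)
    simp only [Sym2.mem_iff, Prod.mk.injEq] at hxe
    rcases hxe with ⟨hw, hj⟩ | ⟨hw, hj⟩
    · subst hw; subst hj
      have hR : ¬ s((v,i-1),(v,i)) ∈ M := by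
        intro hmem
        have hx2 : (v,i) ∈ s((v,i-1),(v,i)) := by simp [Sym2.mem_iff]
        have heq := hu _ ⟨hmem, hx2⟩
        rw [show s((v,i-1),(v,i)) = s((v,i-1),(v,(i-1)+1)) by rw [zsub]] at heq
        exact zone (sub_eq_self.mp (blue_rep heq).2)
      exact iff_of_true heM hR
    · subst hw
      obtain rfl : j = i - 1 := by rw [hj]; ring
      rw [zsub] at heM
      have hL : ¬ s((v,i),(v,i+1)) ∈ M := by
        intro hmem
        have hx2 : (v,i) ∈ s((v,i),(v,i+1)) := by simp [Sym2.mem_iff]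
        have heq := hu _ ⟨hmem, hx2⟩
        rw [show s((v,i-1),(v,(i-1)+1)) = s((v,i-1),(v,i)) by rw [zsub]] at heq
        rw [show s((v,i-1),(v,i)) = s((v,i-1),(v,(i-1)+1)) by rw [zsub]] at heq
        have := (blue_rep heq.symm).2
        exact zone (sub_eq_self.mp this)
      have hR : s((v,i-1),(v,i)) ∈ M := heM
      exact iff_of_false hL (not_not_intro hR)
  set f : V → Bool := fun v => decide (s((v,(1:ZMod 6)),(v,2)) ∈ M) with hf
  have hfv : ∀ v, (f v = true) ↔ s((v,(1:ZMod 6)),(v,2)) ∈ M := by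
    intro v; simp [hf]
  have hQchain : ∀ v j, (s((v,j),(v,j+1)) ∈ M) ↔
      ((j.val % 2 = 1) ↔ s((v,(1:ZMod 6)),(v,1+1)) ∈ M) :=
    fun v => chain (fun j => s((v,j),(v,j+1)) ∈ M) (fun i => by show _ ↔ ¬ s((v,i-1),(v,(i-1)+1)) ∈ M; rw [zsub]; exact hQ v i)
  refine ⟨f, ?_⟩
  ext e
  constructor
  · intro he
    obtain ⟨v, j, hp, rfl⟩ := mem_tf.mp he
    refine (hQchain v j).mpr ?_
    rw [show (1:ZMod 6)+1 = 2 by decide]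
    exact hp.trans (hfv v)
  · intro he
    obtain ⟨⟨v,j⟩, -, rfl⟩ := Finset.mem_image.mp (hMb he)
    have hh := (hQchain v j).mp he
    rw [show (1:ZMod 6)+1 = 2 by decide] at hh
    exact mem_tf.mpr ⟨v, j, hh.trans (hfv v).symm, rfl⟩

/-- in the hexagon graph `H` of a cubic graph `G` on `n` vertices,
the white edges form a perfect matching, and the number of blue perfect matchings
(perfect matchings of `H` consisting only of blue edges) is exactly `2 ^ n`. -/
theorem stmt_12 {V : Type*} [Fintype V] [DecidableEq V]
    (G : SimpleGraph V) [DecidableRel G.Adj]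
    (hcubic : ∀ v, G.degree v = 3)
    (ind : V → V → ZMod 6)
    (hind3 : ∀ v u, G.Adj v u → (ind v u).val < 3)
    (hinj : ∀ v u w, G.Adj v u → G.Adj v w → u ≠ w → ind v u ≠ ind v w)
    (blue white : Finset (Sym2 (V × ZMod 6)))
    (hblue : blue = Finset.univ.image
      (fun p : V × ZMod 6 => s((p.1, p.2), (p.1, p.2 + 1))))
    (hwhite : white = (Finset.univ.filter
        (fun p : V × V => G.Adj p.1 p.2)).biUnion
      (fun p => whitePair ind p.1 p.2)) :
    (∀ x : V × ZMod 6, ∃! e, e ∈ white ∧ x ∈ e) ∧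
    Nat.card {M : Finset (Sym2 (V × ZMod 6)) //
      M ⊆ blue ∧ ∀ x : V × ZMod 6, ∃! e, e ∈ M ∧ x ∈ e}
      = 2 ^ Fintype.card V := by
  constructor
  · rintro ⟨v, i⟩
    have ht : (if i.val < 3 then i else i - 3).val < 3 := ztlt i
    obtain ⟨u, hadj, hut⟩ := nbr_exists G hcubic ind hind3 hinj v _ ht
    have hvu : v ≠ u := hadj.ne
    have hior : i = ind v u ∨ i = ind v u + 3 := by rw [hut]; exact zt_or i
    have hex : ∃ e ∈ whitePair ind v u, ((v,i) : V × ZMod 6) ∈ e := by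
      unfold whitePair
      split_ifs with hc <;> rcases hior with h | h
      · exact ⟨_, Finset.mem_insert_self _ _, by simp [Sym2.mem_iff, h]⟩
      · exact ⟨_, Finset.mem_insert_of_mem (Finset.mem_singleton_self _), by simp [Sym2.mem_iff, h]⟩
      · exact ⟨_, Finset.mem_insert_self _ _, by simp [Sym2.mem_iff, h]⟩
      · exact ⟨_, Finset.mem_insert_of_mem (Finset.mem_singleton_self _), by simp [Sym2.mem_iff, h]⟩
    obtain ⟨e, hewp, hve⟩ := hex
    refine ⟨e, ⟨?_, hve⟩, ?_⟩
    · rw [hwhite]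
      exact Finset.mem_biUnion.mpr ⟨(v,u), by simp [hadj], hewp⟩
    · rintro e' ⟨he'w, he'x⟩
      rw [hwhite] at he'w
      obtain ⟨⟨x,y⟩, hxy, he'p⟩ := Finset.mem_biUnion.mp he'w
      have hxyadj : G.Adj x y := by simpa using hxy
      have hkey : ∃ w, G.Adj v w ∧ (i = ind v w ∨ i = ind v w + 3) ∧
          e' ∈ whitePair ind v w := by
        have he'p0 := he'p
        unfold whitePair at he'p
        split_ifs at he'p with hc
        all_goals simp only [Finset.mem_insert, Finset.mem_singleton] at he'p
        all_goals rcases he'p with rfl | rfl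
        all_goals simp only [Sym2.mem_iff, Prod.mk.injEq] at he'x
        all_goals rcases he'x with ⟨rfl, hi⟩ | ⟨rfl, hi⟩
        all_goals first
          | exact ⟨y, hxyadj, Or.inl hi, he'p0⟩
          | exact ⟨y, hxyadj, Or.inr hi, he'p0⟩
          | exact ⟨x, hxyadj.symm, Or.inl hi, by
              rw [whitePair_comm ind x v] at he'p0; exact he'p0⟩
          | exact ⟨x, hxyadj.symm, Or.inr hi, by
              rw [whitePair_comm ind x v] at he'p0; exact he'p0⟩
      obtain ⟨w, hw, hiw, he'wp⟩ := hkey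
      have hwt : ind v w = ind v u := by
        rw [hut]
        exact zt_eq i (ind v w) (hind3 v w hw) hiw
      obtain rfl : w = u := by
        by_contra hne
        exact hinj v w u hw hadj hne hwt
      exact wp_unique ind hvu he'wp hewp he'x hve
  · subst hblue
    have hbij : Function.Bijective
        (fun f : V → Bool =>
          (⟨tf f, tf_sub f, tf_pm f⟩ :
            {M : Finset (Sym2 (V × ZMod 6)) //
              M ⊆ Finset.univ.image
                (fun p : V × ZMod 6 => s((p.1, p.2), (p.1, p.2 + 1))) ∧
              ∀ x : V × ZMod 6, ∃! e, e ∈ M ∧ x ∈ e})) := by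
      constructor
      · intro f g hfg
        have h1 : tf f = tf g := congrArg Subtype.val hfg
        funext v
        have h2 := tf_one f v
        rw [h1] at h2
        have h3 := h2.symm.trans (tf_one g v)
        cases hfv : f v <;> cases hgv : g v <;> simp_all
      · rintro ⟨M, hMb, hMpm⟩
        obtain ⟨f, hfM⟩ := tf_surj M hMb hMpm
        exact ⟨f, Subtype.ext hfM⟩
    rw [← Nat.card_eq_of_bijective _ hbij, Nat.card_eq_fintype_card,
      Fintype.card_fun, Fintype.card_bool]
end

section
/- Let G be a finite simple graph in which every vertex has degree 2 or 3, and suppose G has a bridge e = {u, v} such that both components of G − e contain a vertex of degree 3. Then for the mixed graph (V(G), E(G), ∅) (no arcs), the full vertex set V(G) admits no partition of the doubled arc set into safe directed paths and cycles; concretely, after replacing every edge by two opposite arcs, every partition of the arcs into directed cycles contains a cycle traversing both arcs arising from e, i.e., a directed 2-cycle on {u, v} using only doubled-edge arcs, which is forbidden. -/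
/-!
Let `S` be the side of `u` in `G − uv`. A closed walk leaves `S` as often as it enters it, and
the only dart leaving `S` is `(u, v)` while the only one entering it is `(v, u)`. So every closed
walk uses `(u, v)` and `(v, u)` equally often, and the cycle of the partition that carries `(u, v)`
also carries `(v, u)`.
-/

namespace SimpleGraph

variable {V : Type*} {G : SimpleGraph V}

namespace Walk

theorem countP_darts_leaving_add (S : Set V) [DecidablePred (· ∈ S)] {a b : V}
    (w : G.Walk a b) :
    w.darts.countP (fun d => d.fst ∈ S ∧ d.snd ∉ S) + (if b ∈ S then 1 else 0) =
      w.darts.countP (fun d => d.fst ∉ S ∧ d.snd ∈ S) + (if a ∈ S then 1 else 0) := by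
  induction w with
  | nil => simp
  | @cons a x b h q ih =>
    simp only [darts_cons, List.countP_cons]
    by_cases ha : a ∈ S <;> by_cases hx : x ∈ S <;> simp [ha, hx] at ih ⊢ <;> omega

theorem countP_darts_leaving_eq_entering (S : Set V) [DecidablePred (· ∈ S)] {a : V}
    (w : G.Walk a a) :
    w.darts.countP (fun d => d.fst ∈ S ∧ d.snd ∉ S) =
      w.darts.countP (fun d => d.fst ∉ S ∧ d.snd ∈ S) := by
  simpa using w.countP_darts_leaving_add S

end Walk

theorem reachable_deleteEdges_iff_of_adj {e : Sym2 V} {u a x : V} (hax : G.Adj a x)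
    (hne : s(a, x) ≠ e) :
    (G.deleteEdges {e}).Reachable u a ↔ (G.deleteEdges {e}).Reachable u x :=
  have hdel : (G.deleteEdges {e}).Adj a x := deleteEdges_adj.2 ⟨hax, hne⟩
  ⟨fun h => h.trans hdel.reachable, fun h => h.trans hdel.symm.reachable⟩

theorem IsBridge.dart_leaving_iff {u v : V} (hb : G.IsBridge s(u, v)) (d : G.Dart) :
    ((G.deleteEdges {s(u, v)}).Reachable u d.fst ∧
      ¬ (G.deleteEdges {s(u, v)}).Reachable u d.snd) ↔ d.toProd = (u, v) := by
  constructor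
  · rintro ⟨hfst, hsnd⟩
    have hedge : s(d.fst, d.snd) = s(u, v) := by
      by_contra hne
      exact hsnd ((reachable_deleteEdges_iff_of_adj d.adj hne).1 hfst)
    rcases Sym2.eq_iff.1 hedge with ⟨h1, h2⟩ | ⟨h1, -⟩
    · exact Prod.ext h1 h2
    · exact absurd (h1 ▸ hfst) (isBridge_iff.1 hb)
  · intro hd
    rw [show d.fst = u from congrArg Prod.fst hd, show d.snd = v from congrArg Prod.snd hd]
    exact ⟨.refl u, isBridge_iff.1 hb⟩

theorem IsBridge.dart_entering_iff {u v : V} (hb : G.IsBridge s(u, v)) (d : G.Dart) :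
    (¬ (G.deleteEdges {s(u, v)}).Reachable u d.fst ∧
      (G.deleteEdges {s(u, v)}).Reachable u d.snd) ↔ d.toProd = (v, u) := by
  simpa [and_comm, Prod.ext_iff] using hb.dart_leaving_iff d.symm

theorem IsBridge.count_darts_eq_count_darts_swap [DecidableEq V] {u v a : V}
    (hb : G.IsBridge s(u, v)) (w : G.Walk a a) :
    (w.darts.map Dart.toProd).count (u, v) = (w.darts.map Dart.toProd).count (v, u) := by
  classical
  let S : Set V := {x | (G.deleteEdges {s(u, v)}).Reachable u x}
  simp only [List.count_eq_countP, List.countP_map]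
  calc List.countP _ w.darts
      = w.darts.countP (fun d => d.fst ∈ S ∧ d.snd ∉ S) :=
        List.countP_congr fun d _ => by simpa [S] using (hb.dart_leaving_iff d).symm
    _ = w.darts.countP (fun d => d.fst ∉ S ∧ d.snd ∈ S) := w.countP_darts_leaving_eq_entering S
    _ = List.countP _ w.darts :=
        List.countP_congr fun d _ => by simpa [S] using hb.dart_entering_iff d

end SimpleGraph

theorem stmt_19_general {V : Type*} [DecidableEq V]
    (G : SimpleGraph V)
    (u v : V) (hadj : G.Adj u v)
    (hbridge : G.IsBridge s(u, v))
    (ι : Type*) [Fintype ι] (b : ι → V) (c : ∀ i, G.Walk (b i) (b i))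
    (hpart : ∀ x y : V, G.Adj x y →
      (∑ i, ((c i).darts.map SimpleGraph.Dart.toProd).count (x, y)) = 1) :
    ∃ i, (u, v) ∈ (c i).darts.map SimpleGraph.Dart.toProd ∧
         (v, u) ∈ (c i).darts.map SimpleGraph.Dart.toProd := by
  obtain ⟨i, -, hi⟩ := Finset.exists_ne_zero_of_sum_ne_zero (hpart u v hadj ▸ one_ne_zero)
  have hswap := hbridge.count_darts_eq_count_darts_swap (c i)
  refine ⟨i, List.count_pos_iff.1 (Nat.pos_of_ne_zero hi), List.count_pos_iff.1 ?_⟩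
  exact hswap ▸ Nat.pos_of_ne_zero hi

/-- let `G` have all degrees 2 or 3 and a bridge `e = {u, v}` such
that both components of `G − e` contain a vertex of degree 3. After replacing
every edge by two opposite arcs, every partition of the arcs into directed cycles
(closed walks with no repeated vertices using each arc exactly once) contains a
cycle traversing both arcs arising from `e` — i.e. the forbidden directed 2-cycle
on `{u, v}` consisting only of doubled-edge arcs. Hence the full vertex set admits
no safe reduction. -/
theorem stmt_19 {V : Type*} [Fintype V] [DecidableEq V]
    (G : SimpleGraph V) [DecidableRel G.Adj]
    (hdeg : ∀ w, G.degree w = 2 ∨ G.degree w = 3)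
    (u v : V) (hadj : G.Adj u v)
    (hbridge : G.IsBridge s(u, v))
    (hdeg3u : ∃ x, (G.deleteEdges {s(u, v)}).Reachable u x ∧ G.degree x = 3)
    (hdeg3v : ∃ y, (G.deleteEdges {s(u, v)}).Reachable v y ∧ G.degree y = 3)
    (ι : Type*) [Fintype ι] (b : ι → V) (c : ∀ i, G.Walk (b i) (b i))
    (hcyc : ∀ i, (c i).support.tail.Nodup ∧ 0 < (c i).length)
    (hpart : ∀ x y : V, G.Adj x y →
      (∑ i, ((c i).darts.map SimpleGraph.Dart.toProd).count (x, y)) = 1) :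
    ∃ i, (u, v) ∈ (c i).darts.map SimpleGraph.Dart.toProd ∧
         (v, u) ∈ (c i).darts.map SimpleGraph.Dart.toProd :=
  stmt_19_general G u v hadj hbridge ι b c hpart
end
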